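/- Let q be an odd prime power, let (a,b) be a valid pair in F_q^2 with a ≠ b, and let ω = ω[a,b]. Let T_1 = {(-1,-1,-1,1), (-1,-1,1,-1), (-1,1,1,1), (1,-1,1,1)}. Then the number of sequences z ∈ T_1 that ω satisfies is either 0 or 2. (Equivalently, by the paper's correspondence between Type One transpositions and satisfied sequences in T_1, the number of Type One transpositions in ω is either 0 or 2.) -/

import Mathlib

open scoped Classical
open Finset

noncomputable section

variable {F : Type*} [Field F] [Fintype F]

/-- `x ∈ R_q`: `x` is a nonzero square in `F`. -/
def inR (x : F) : Prop := x ≠ 0 ∧ IsSquare x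

/-- `x ∈ N_q`: `x` is a nonzero non-square in `F`. -/
def inN (x : F) : Prop := x ≠ 0 ∧ ¬ IsSquare x

/-- `(a, b)` is a valid pair: `ab ∈ R_q` and `(a-1)(b-1) ∈ R_q`. -/
def ValidPair (a b : F) : Prop := inR (a * b) ∧ inR ((a - 1) * (b - 1))

/-- The operation of the quadratic quasigroup `Q_{a,b}`:
`x*y = x + a(y-x)` if `y - x ∈ R_q`, `x*y = x + b(y-x)` if `y - x ∈ N_q`, and `x*x = x`. -/
def qmul (a b x y : F) : F :=
  if inR (y - x) then x + a * (y - x) else x + b * (y - x)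

/-- The extended quadratic character `χ` of `F_q`. -/
def chi (x : F) : ℤ := if x = 0 then 0 else if IsSquare x then 1 else -1

/-- The quadratic map `φ = φ[a,b]`: `φ(x) = ax` if `x ∈ R_q` and `φ(x) = bx` otherwise. -/
def phi (a b x : F) : F := if inR x then a * x else b * x

/-- `ω` satisfies `z = (z₀,z₁,z₂,z₃)` with `j`, where `φE` is the permutation induced by
`φ[a,b]`: `ω(ω(j)) = j`, `χ(j) = z₀`, `χ(φ⁻¹(j)-1) = z₁`, `χ(ω(j)) = z₂`, and
`χ(φ⁻¹(ω(j))-1) = z₃`. -/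
def SatisfiesWith (ω φE : Equiv.Perm F) (z : ℤ × ℤ × ℤ × ℤ) (j : F) : Prop :=
  ω (ω j) = j ∧ chi j = z.1 ∧ chi (φE.symm j - 1) = z.2.1 ∧
    chi (ω j) = z.2.2.1 ∧ chi (φE.symm (ω j) - 1) = z.2.2.2

/-- `ω` satisfies `z` if it satisfies `z` with some `j ∈ F_q`. -/
def Satisfies (ω φE : Equiv.Perm F) (z : ℤ × ℤ × ℤ × ℤ) : Prop :=
  ∃ j : F, SatisfiesWith ω φE z j


lemma chi_eq_quad (x : F) : chi x = quadraticChar F x := by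
  rw [quadraticChar_apply]
  unfold chi quadraticCharFun
  split_ifs <;> rfl

lemma chi_mul (x y : F) : chi (x * y) = chi x * chi y := by
  rw [chi_eq_quad, chi_eq_quad, chi_eq_quad]
  exact map_mul _ _ _

lemma chi_zero_iff (x : F) : chi x = 0 ↔ x = 0 := by
  unfold chi; split_ifs <;> simp_all

lemma chi_cases (x : F) : chi x = 0 ∨ chi x = 1 ∨ chi x = -1 := by
  unfold chi; split_ifs <;> simp

lemma chi_one : chi (1 : F) = 1 := by
  unfold chi; rw [if_neg one_ne_zero, if_pos IsSquare.one]

lemma chi_inv (x : F) : chi x⁻¹ = chi x := by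
  rcases eq_or_ne x 0 with rfl | hx
  · rw [inv_zero]
  · have h : chi x * chi x⁻¹ = 1 := by
      rw [← chi_mul, mul_inv_cancel₀ hx, chi_one]
    have h1 := chi_cases x
    have h2 := chi_cases x⁻¹
    have h3 : chi x ≠ 0 := by rw [ne_eq, chi_zero_iff]; exact hx
    rcases h1 with h1 | h1 | h1 <;> rcases h2 with h2 | h2 | h2 <;>
      rw [h1, h2] at h ⊢ <;> omega

lemma chi_div (x y : F) : chi (x / y) = chi x * chi y := by
  rw [div_eq_mul_inv, chi_mul, chi_inv]

lemma chi_eq_one_iff (x : F) : chi x = 1 ↔ inR x := by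
  unfold chi inR; split_ifs <;> simp_all

lemma chi_scale {y t x : F} (h : y = t * x) : chi y = chi t * chi x := by
  rw [h, chi_mul]

lemma master (φE ω : Equiv.Perm F) (A B C D : F) (α β γ δ z₀ z₂ : ℤ)
    (hA : ∀ x : F, chi x = α → φE x = A * x)
    (hB : ∀ x : F, chi x = β → φE x = B * x)
    (hC : ∀ x : F, chi x = γ → φE x = C * x)
    (hD : ∀ x : F, chi x = δ → φE x = D * x)
    (h0 : ∀ x : F, chi (φE x) = z₀ ↔ chi x = α)
    (h2 : ∀ x : F, chi (φE x) = z₂ ↔ chi x = γ)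
    (hω : ∀ x : F, ω x = 1 + φE (φE.symm x - 1))
    (hΔ : A * C - B * D ≠ 0) (hC0 : C ≠ 0)
    (i₀ m₀ : F) (hs1 : C * m₀ = 1 + B * (i₀ - 1)) (hs2 : A * i₀ = 1 + D * (m₀ - 1)) :
    Satisfies ω φE (z₀, β, z₂, δ) ↔
      (chi i₀ = α ∧ chi (i₀ - 1) = β ∧ chi m₀ = γ ∧ chi (m₀ - 1) = δ) := by
  constructor
  · rintro ⟨j, hjj, hz0, hz1, hz2, hz3⟩
    set i := φE.symm j with hi
    set m := φE.symm (ω j) with hm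
    have hchi_i : chi i = α := (h0 i).mp (by rw [hi, Equiv.apply_symm_apply]; exact hz0)
    have hchi_m : chi m = γ := (h2 m).mp (by rw [hm, Equiv.apply_symm_apply]; exact hz2)
    have eq1 : C * m = 1 + B * (i - 1) := by
      have e1 : φE m = ω j := by rw [hm]; exact Equiv.apply_symm_apply _ _
      calc C * m = φE m := (hC m hchi_m).symm
        _ = ω j := e1
        _ = 1 + φE (φE.symm j - 1) := hω j
        _ = 1 + B * (i - 1) := by rw [← hi, hB _ hz1]
    have eq2 : A * i = 1 + D * (m - 1) := by
      have e1 : φE i = j := by rw [hi]; exact Equiv.apply_symm_apply _ _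
      calc A * i = φE i := (hA i hchi_i).symm
        _ = j := e1
        _ = ω (ω j) := hjj.symm
        _ = 1 + φE (φE.symm (ω j) - 1) := hω (ω j)
        _ = 1 + D * (m - 1) := by rw [← hm, hD _ hz3]
    have hii : (A * C - B * D) * (i - i₀) = 0 := by
      linear_combination C * eq2 - C * hs2 + D * eq1 - D * hs1
    have hi0 : i = i₀ := by
      rcases mul_eq_zero.mp hii with h | h
      · exact absurd h hΔ
      · exact sub_eq_zero.mp h
    have hm0 : m = m₀ := by
      have h : C * (m - m₀) = 0 := by linear_combination eq1 - hs1 + B * hi0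
      rcases mul_eq_zero.mp h with h | h
      · exact absurd h hC0
      · exact sub_eq_zero.mp h
    rw [hi0] at hchi_i hz1
    rw [hm0] at hchi_m hz3
    exact ⟨hchi_i, hz1, hchi_m, hz3⟩
  · rintro ⟨h1, h1', h3, h3'⟩
    have hji : φE i₀ = A * i₀ := hA _ h1
    have hsy : φE.symm (A * i₀) = i₀ := by rw [← hji, Equiv.symm_apply_apply]
    have hωj : ω (A * i₀) = C * m₀ := by
      rw [hω, hsy, hB _ h1', hs1]
    have hjm : φE m₀ = C * m₀ := hC _ h3
    have hsy2 : φE.symm (C * m₀) = m₀ := by rw [← hjm, Equiv.symm_apply_apply]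
    refine ⟨A * i₀, ?_, ?_, ?_, ?_, ?_⟩
    · rw [hωj, hω, hsy2, hD _ h3', ← hs2]
    · rw [← hji]; exact (h0 i₀).mpr h1
    · rw [hsy]; exact h1'
    · rw [hωj, ← hjm]; exact (h2 m₀).mpr h3
    · rw [hωj, hsy2]; exact h3'

lemma count_helper {α : Type*} [DecidableEq α] (P : α → Prop) [DecidablePred P]
    (s : Finset α) (w x y z : α) (hs : s = {w, x, y, z}) (hwx : w ≠ x) (hyz : y ≠ z)
    (hPwx : P w ↔ P x) (hPyz : P y ↔ P z) (hex : ¬ (P w ∧ P y)) :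
    (s.filter P).card = 0 ∨ (s.filter P).card = 2 := by
  subst hs
  by_cases hw : P w
  · right
    have hx := hPwx.mp hw
    have hy : ¬ P y := fun h => hex ⟨hw, h⟩
    have hz : ¬ P z := fun h => hy (hPyz.mpr h)
    have hfe : ({w, x, y, z} : Finset α).filter P = {w, x} := by
      ext r
      simp only [Finset.mem_filter, Finset.mem_insert, Finset.mem_singleton]
      constructor
      · rintro ⟨(rfl | rfl | rfl | rfl), h⟩ <;> tauto
      · rintro (rfl | rfl) <;> exact ⟨by tauto, by tauto⟩
    rw [hfe, Finset.card_pair hwx]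
  · have hx : ¬ P x := fun h => hw (hPwx.mpr h)
    by_cases hy : P y
    · right
      have hz := hPyz.mp hy
      have hfe : ({w, x, y, z} : Finset α).filter P = {y, z} := by
        ext r
        simp only [Finset.mem_filter, Finset.mem_insert, Finset.mem_singleton]
        constructor
        · rintro ⟨(rfl | rfl | rfl | rfl), h⟩ <;> tauto
        · rintro (rfl | rfl) <;> exact ⟨by tauto, by tauto⟩
      rw [hfe, Finset.card_pair hyz]
    · left
      have hz : ¬ P z := fun h => hy (hPyz.mpr h)
      rw [Finset.card_eq_zero, Finset.filter_eq_empty_iff]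
      rintro r hr
      simp only [Finset.mem_insert, Finset.mem_singleton] at hr
      rcases hr with rfl | rfl | rfl | rfl <;> assumption

set_option maxHeartbeats 2000000 in
/-- Lemma 2.7: the number of sequences in
`T₁ = {(-1,-1,-1,1), (-1,-1,1,-1), (-1,1,1,1), (1,-1,1,1)}` that `ω = ω[a,b]` satisfies
is either `0` or `2` (equivalently, the number of Type One transpositions in `ω` is
either `0` or `2`). -/
theorem t1_count_zero_or_two
    (hodd : Odd (Fintype.card F)) (a b : F) (hv : ValidPair a b) (hab : a ≠ b)
    (φE ω : Equiv.Perm F)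
    (hφ : ∀ x : F, φE x = phi a b x)
    (hω : ∀ x : F, ω x = 1 + φE (φE.symm x - 1)) :
    (({((-1 : ℤ), (-1 : ℤ), (-1 : ℤ), (1 : ℤ)), (-1, -1, 1, -1), (-1, 1, 1, 1),
        (1, -1, 1, 1)} : Finset (ℤ × ℤ × ℤ × ℤ)).filter
          fun z => Satisfies ω φE z).card = 0 ∨
    (({((-1 : ℤ), (-1 : ℤ), (-1 : ℤ), (1 : ℤ)), (-1, -1, 1, -1), (-1, 1, 1, 1),
        (1, -1, 1, 1)} : Finset (ℤ × ℤ × ℤ × ℤ)).filter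
          fun z => Satisfies ω φE z).card = 2 := by
  classical
  obtain ⟨⟨habne, habsq⟩, ⟨hab1ne, hab1sq⟩⟩ := hv
  have ha : a ≠ 0 := left_ne_zero_of_mul habne
  have hb : b ≠ 0 := right_ne_zero_of_mul habne
  have ha1 : a - 1 ≠ 0 := left_ne_zero_of_mul hab1ne
  have hb1 : b - 1 ≠ 0 := right_ne_zero_of_mul hab1ne
  have h1a : (1 : F) - a ≠ 0 := fun h => ha1 (by linear_combination -h)
  have h1b : (1 : F) - b ≠ 0 := fun h => hb1 (by linear_combination -h)
  have hba : b - a ≠ 0 := sub_ne_zero.mpr (Ne.symm hab)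
  have hab' : a - b ≠ 0 := sub_ne_zero.mpr hab
  have hchiab : chi (a * b) = 1 := (chi_eq_one_iff _).mpr ⟨habne, habsq⟩
  have hchiab1 : chi ((a - 1) * (b - 1)) = 1 := (chi_eq_one_iff _).mpr ⟨hab1ne, hab1sq⟩
  have hca_cb : chi a * chi b = 1 := by rw [← chi_mul]; exact hchiab
  have hca1 : chi (a - 1) * chi (b - 1) = 1 := by rw [← chi_mul]; exact hchiab1
  have hane : chi a ≠ 0 := fun h => ha ((chi_zero_iff a).mp h)
  have hbne : chi b ≠ 0 := fun h => hb ((chi_zero_iff b).mp h)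
  have hm1ne : chi (-1 : F) = 1 ∨ chi (-1 : F) = -1 := by
    have h1 := chi_cases (-1 : F)
    have h2 : chi (-1 : F) ≠ 0 :=
      fun h => (neg_ne_zero.mpr (one_ne_zero (α := F))) ((chi_zero_iff _).mp h)
    tauto
  have hsab : chi b = chi a := by
    rcases chi_cases a with h | h | h <;> rcases chi_cases b with h' | h' | h' <;>
      rw [h, h'] at hca_cb ⊢ <;> omega
  have hφR : ∀ x : F, chi x = 1 → φE x = a * x := by
    intro x hx
    rw [hφ]; unfold phi; rw [if_pos ((chi_eq_one_iff x).mp hx)]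
  have hφN : ∀ x : F, chi x = -1 → φE x = b * x := by
    intro x hx
    rw [hφ]; unfold phi; rw [if_neg]
    intro hxR
    rw [← chi_eq_one_iff] at hxR
    omega
  have hchiφ : ∀ x : F, chi (φE x) = chi a * chi x := by
    intro x
    rcases chi_cases x with h | h | h
    · have hx0 : x = 0 := (chi_zero_iff x).mp h
      subst hx0
      have h0 : φE (0 : F) = b * 0 := by
        rw [hφ]; unfold phi; rw [if_neg]
        exact fun hR => hR.1 rfl
      have hz : chi (0 : F) = 0 := (chi_zero_iff (0 : F)).mpr rfl
      rw [h0, mul_zero, hz, mul_zero]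
    · rw [hφR x h, chi_mul]
    · rw [hφN x h, chi_mul, hsab]
  -- the basic quantities
  set i1 : F := (a + b - 2 * a * b) / (b * (b - a)) with hi1
  set m1 : F := (2 - a - b) / (b - a) with hm1
  set i2 : F := ((1 - b) * (a + b)) / (b * (a - b)) with hi2
  set m2 : F := (2 * (1 - b)) / (a - b) with hm2
  set i3 : F := (2 * (1 - a)) / (b - a) with hi3
  set m3 : F := ((1 - a) * (a + b)) / (a * (b - a)) with hm3
  set i4 : F := (2 - a - b) / (a - b) with hi4
  set m4 : F := (a + b - 2 * a * b) / (a * (a - b)) with hm4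
  -- auxiliary character values
  have h1ab : chi (1 - a) * chi (1 - b) = 1 := by
    have e1 : (1 : F) - a = (-1) * (a - 1) := by ring
    have e2 : (1 : F) - b = (-1) * (b - 1) := by ring
    rw [e1, e2, chi_mul, chi_mul]
    rcases hm1ne with h | h <;> rw [h] <;> linear_combination hca1
  have hfg : chi ((1 - a) / (1 - b)) = 1 := by rw [chi_div]; exact h1ab
  have hba2 : chi (b / a) = 1 := by rw [chi_div, mul_comm]; exact hca_cb
  have htm : chi (((1 - a) * b) / ((1 - b) * a)) = 1 := by
    rw [chi_div, chi_mul, chi_mul]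
    linear_combination (chi a * chi b) * h1ab + hca_cb
  -- the twelve relations
  have r1 : chi i2 = chi (-1 : F) * chi (i1 - 1) := by
    have h : i2 = (-1 : F) * (i1 - 1) := by rw [hi2, hi1]; field_simp; ring
    rw [h, chi_mul]
  have r2 : chi (i2 - 1) = chi (-1 : F) * chi i1 := by
    have h : i2 - 1 = (-1 : F) * i1 := by rw [hi2, hi1]; field_simp; ring
    rw [h, chi_mul]
  have r3 : chi m2 = chi (-1 : F) * chi (m1 - 1) := by
    have h : m2 = (-1 : F) * (m1 - 1) := by rw [hm2, hm1]; field_simp; ring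
    rw [h, chi_mul]
  have r4 : chi (m2 - 1) = chi (-1 : F) * chi m1 := by
    have h : m2 - 1 = (-1 : F) * m1 := by rw [hm2, hm1]; field_simp; ring
    rw [h, chi_mul]
  have r5 : chi i3 = chi (m1 - 1) := by
    have h : i3 = ((1 - a) / (1 - b)) * (m1 - 1) := by rw [hi3, hm1]; field_simp; ring
    rw [h, chi_mul, hfg, one_mul]
  have r6 : chi (i3 - 1) = chi m1 := by
    have h : i3 - 1 = m1 := by rw [hi3, hm1]; field_simp; ring
    rw [h]
  have r7 : chi m3 = chi (i1 - 1) := by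
    have h : m3 = (((1 - a) * b) / ((1 - b) * a)) * (i1 - 1) := by
      rw [hm3, hi1]; field_simp; ring
    rw [h, chi_mul, htm, one_mul]
  have r8 : chi (m3 - 1) = chi i1 := by
    have h : m3 - 1 = (b / a) * i1 := by rw [hm3, hi1]; field_simp; ring
    rw [h, chi_mul, hba2, one_mul]
  have r9 : chi i4 = chi (-1 : F) * chi m1 := by
    have h : i4 = (-1 : F) * m1 := by rw [hi4, hm1]; field_simp; ring
    rw [h, chi_mul]
  have r10 : chi (i4 - 1) = chi (-1 : F) * chi (m1 - 1) := by
    have h : i4 - 1 = ((-1 : F) * ((1 - a) / (1 - b))) * (m1 - 1) := by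
      rw [hi4, hm1]; field_simp; ring
    rw [h, chi_mul, chi_mul, hfg, mul_one]
  have r11 : chi m4 = chi (-1 : F) * chi i1 := by
    have h : m4 = ((-1 : F) * (b / a)) * i1 := by rw [hm4, hi1]; field_simp; ring
    rw [h, chi_mul, chi_mul, hba2, mul_one]
  have r12 : chi (m4 - 1) = chi (-1 : F) * chi (i1 - 1) := by
    have h : m4 - 1 = ((-1 : F) * (((1 - a) * b) / ((1 - b) * a))) * (i1 - 1) := by
      rw [hm4, hi1]; field_simp; ring
    rw [h, chi_mul, chi_mul, htm, mul_one]
  -- determinant facts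
  have hD1 : b * b - b * a ≠ 0 := by
    have h : b * b - b * a = b * (b - a) := by ring
    rw [h]; exact mul_ne_zero hb hba
  have hD2 : b * a - b * b ≠ 0 := by
    have h : b * a - b * b = b * (a - b) := by ring
    rw [h]; exact mul_ne_zero hb hab'
  have hD3 : b * a - a * a ≠ 0 := by
    have h : b * a - a * a = a * (b - a) := by ring
    rw [h]; exact mul_ne_zero ha hba
  have hD4 : a * a - b * a ≠ 0 := by
    have h : a * a - b * a = a * (a - b) := by ring
    rw [h]; exact mul_ne_zero ha hab'
  have hD5 : a * b - b * b ≠ 0 := by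
    have h : a * b - b * b = b * (a - b) := by ring
    rw [h]; exact mul_ne_zero hb hab'
  have hD6 : a * b - a * a ≠ 0 := by
    have h : a * b - a * a = a * (b - a) := by ring
    rw [h]; exact mul_ne_zero ha hba
  rcases chi_cases a with h | hsa | hsa
  · exact absurd h hane
  · -- χ(a) = 1 branch
    have hsb : chi b = 1 := by rw [hsab, hsa]
    have hP1 : ∀ x : F, chi (φE x) = 1 ↔ chi x = 1 := fun x => by
      rw [hchiφ x, hsa]; omega
    have hQ1 : ∀ x : F, chi (φE x) = -1 ↔ chi x = -1 := fun x => by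
      rw [hchiφ x, hsa]; omega
    have hS1 : Satisfies ω φE ((-1 : ℤ), (-1 : ℤ), (-1 : ℤ), (1 : ℤ)) ↔
        (chi i1 = -1 ∧ chi (i1 - 1) = -1 ∧ chi m1 = -1 ∧ chi (m1 - 1) = 1) :=
      master φE ω b b b a (-1) (-1) (-1) 1 (-1) (-1) hφN hφN hφN hφR hQ1 hQ1 hω hD1 hb
        i1 m1 (by rw [hi1, hm1]; field_simp; ring) (by rw [hi1, hm1]; field_simp; ring)
    have hS2 : Satisfies ω φE ((-1 : ℤ), (-1 : ℤ), (1 : ℤ), (-1 : ℤ)) ↔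
        (chi i2 = -1 ∧ chi (i2 - 1) = -1 ∧ chi m2 = 1 ∧ chi (m2 - 1) = -1) :=
      master φE ω b b a b (-1) (-1) 1 (-1) (-1) 1 hφN hφN hφR hφN hQ1 hP1 hω hD2 ha
        i2 m2 (by rw [hi2, hm2]; field_simp; ring) (by rw [hi2, hm2]; field_simp; ring)
    have hS3 : Satisfies ω φE ((-1 : ℤ), (1 : ℤ), (1 : ℤ), (1 : ℤ)) ↔
        (chi i3 = -1 ∧ chi (i3 - 1) = 1 ∧ chi m3 = 1 ∧ chi (m3 - 1) = 1) :=
      master φE ω b a a a (-1) 1 1 1 (-1) 1 hφN hφR hφR hφR hQ1 hP1 hω hD3 ha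
        i3 m3 (by rw [hi3, hm3]; field_simp; ring) (by rw [hi3, hm3]; field_simp; ring)
    have hS4 : Satisfies ω φE ((1 : ℤ), (-1 : ℤ), (1 : ℤ), (1 : ℤ)) ↔
        (chi i4 = 1 ∧ chi (i4 - 1) = -1 ∧ chi m4 = 1 ∧ chi (m4 - 1) = 1) :=
      master φE ω a b a a 1 (-1) 1 1 1 1 hφR hφN hφR hφR hP1 hP1 hω hD4 ha
        i4 m4 (by rw [hi4, hm4]; field_simp; ring) (by rw [hi4, hm4]; field_simp; ring)
    rw [r1, r2, r3, r4] at hS2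
    rw [r5, r6, r7, r8] at hS3
    rw [r9, r10, r11, r12] at hS4
    rcases hm1ne with hu | hu <;> rw [hu] at hS2 hS4
    · -- χ(-1) = 1 : pairs (z1,z2), (z3,z4)
      refine count_helper _ _ ((-1 : ℤ), (-1 : ℤ), (-1 : ℤ), (1 : ℤ)) (-1, -1, 1, -1)
        (-1, 1, 1, 1) (1, -1, 1, 1) rfl (by decide) (by decide) ?_ ?_ ?_
      · simp only [hS1, hS2]; omega
      · simp only [hS3, hS4]; omega
      · simp only [hS1, hS3]; omega
    · -- χ(-1) = -1 : pairs (z1,z4), (z2,z3)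
      refine count_helper _ _ ((-1 : ℤ), (-1 : ℤ), (-1 : ℤ), (1 : ℤ)) (1, -1, 1, 1)
        (-1, -1, 1, -1) (-1, 1, 1, 1) (by decide) (by decide) (by decide) ?_ ?_ ?_
      · simp only [hS1, hS4]; omega
      · simp only [hS2, hS3]; omega
      · simp only [hS1, hS2]; omega
  · -- χ(a) = -1 branch
    have hsb : chi b = -1 := by rw [hsab, hsa]
    have hP2 : ∀ x : F, chi (φE x) = 1 ↔ chi x = -1 := fun x => by
      rw [hchiφ x, hsa]; omega
    have hQ2 : ∀ x : F, chi (φE x) = -1 ↔ chi x = 1 := fun x => by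
      rw [hchiφ x, hsa]; omega
    have hS1 : Satisfies ω φE ((-1 : ℤ), (-1 : ℤ), (-1 : ℤ), (1 : ℤ)) ↔
        (chi i4 = 1 ∧ chi (i4 - 1) = -1 ∧ chi m4 = 1 ∧ chi (m4 - 1) = 1) :=
      master φE ω a b a a 1 (-1) 1 1 (-1) (-1) hφR hφN hφR hφR hQ2 hQ2 hω hD4 ha
        i4 m4 (by rw [hi4, hm4]; field_simp; ring) (by rw [hi4, hm4]; field_simp; ring)
    have hS2 : Satisfies ω φE ((-1 : ℤ), (-1 : ℤ), (1 : ℤ), (-1 : ℤ)) ↔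
        (chi m2 = 1 ∧ chi (m2 - 1) = -1 ∧ chi i2 = -1 ∧ chi (i2 - 1) = -1) :=
      master φE ω a b b b 1 (-1) (-1) (-1) (-1) 1 hφR hφN hφN hφN hQ2 hP2 hω hD5 hb
        m2 i2 (by rw [hi2, hm2]; field_simp; ring) (by rw [hi2, hm2]; field_simp; ring)
    have hS3 : Satisfies ω φE ((-1 : ℤ), (1 : ℤ), (1 : ℤ), (1 : ℤ)) ↔
        (chi m3 = 1 ∧ chi (m3 - 1) = 1 ∧ chi i3 = -1 ∧ chi (i3 - 1) = 1) :=
      master φE ω a a b a 1 1 (-1) 1 (-1) 1 hφR hφR hφN hφR hQ2 hP2 hω hD6 hb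
        m3 i3 (by rw [hi3, hm3]; field_simp; ring) (by rw [hi3, hm3]; field_simp; ring)
    have hS4 : Satisfies ω φE ((1 : ℤ), (-1 : ℤ), (1 : ℤ), (1 : ℤ)) ↔
        (chi i1 = -1 ∧ chi (i1 - 1) = -1 ∧ chi m1 = -1 ∧ chi (m1 - 1) = 1) :=
      master φE ω b b b a (-1) (-1) (-1) 1 1 1 hφN hφN hφN hφR hP2 hP2 hω hD1 hb
        i1 m1 (by rw [hi1, hm1]; field_simp; ring) (by rw [hi1, hm1]; field_simp; ring)
    rw [r9, r10, r11, r12] at hS1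
    rw [r3, r4, r1, r2] at hS2
    rw [r7, r8, r5, r6] at hS3
    rcases hm1ne with hu | hu <;> rw [hu] at hS1 hS2
    · -- χ(-1) = 1 : pairs (z1,z3), (z2,z4)
      refine count_helper _ _ ((-1 : ℤ), (-1 : ℤ), (-1 : ℤ), (1 : ℤ)) (-1, 1, 1, 1)
        (-1, -1, 1, -1) (1, -1, 1, 1) (by decide) (by decide) (by decide) ?_ ?_ ?_
      · simp only [hS1, hS3]; omega
      · simp only [hS2, hS4]; omega
      · simp only [hS1, hS2]; omega
    · -- χ(-1) = -1 : pairs (z1,z4), (z2,z3)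
      refine count_helper _ _ ((-1 : ℤ), (-1 : ℤ), (-1 : ℤ), (1 : ℤ)) (1, -1, 1, 1)
        (-1, -1, 1, -1) (-1, 1, 1, 1) (by decide) (by decide) (by decide) ?_ ?_ ?_
      · simp only [hS1, hS4]; omega
      · simp only [hS2, hS3]; omega
      · simp only [hS1, hS2]; omega
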